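/- Let M_1 and M_2 be positive semidefinite operators on ⊗_{j=1}^N (H_j^out ⊗ H_j^in) with Tr M_1 = Tr M_2 and (1/2)||M_1 − M_2||_1 ≤ ε for some ε ≥ 0. Then |w_max(M_1) − w_max(M_2)| ≤ D·ε, where D = ∏_{j=1}^N dim(H_j^in) and ||·||_1 is the trace norm. -/

import Mathlib

/-!
Every quantum comb `C` is positive semidefinite with `Tr C = D = ∏ⱼ dim H_j^in`: along the defining
chain, the partial trace over `H_n^out` preserves the trace and tensoring with `I` on `H_n^in`
multiplies it by `dim H_n^in`. In the eigenbasis of the traceless Hermitian `Δ = M₁ - M₂` the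
diagonal entries `eᵢ` of `C` lie in `[0, D]`, so `Tr(ΔC) = ∑ λᵢ eᵢ = ∑ λᵢ (eᵢ - D/2)` is bounded by
`‖Δ‖₁ D / 2 ≤ D ε` uniformly in `C`, and a uniform bound on the difference of two objectives bounds
the difference of their suprema.
-/

open Matrix Filter
open scoped ComplexOrder

attribute [local instance] Classical.propDecidable

noncomputable section

namespace QComb

/-- Dimension of the `j`-th factor of the partial tensor product keeping only
the first `n` factors (the remaining factors are replaced by trivial spaces). -/
def cut {N : ℕ} (d : Fin N → ℕ) (n : ℕ) (j : Fin N) : ℕ := if j.val < n then d j else 1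

/-- Index set of the tensor product of the first `n` factors of the family of
Hilbert spaces `ℂ^{d j}`, `j : Fin N`. -/
def CutIdx {N : ℕ} (d : Fin N → ℕ) (n : ℕ) : Type := ∀ j : Fin N, Fin (cut d n j)

instance {N : ℕ} (d : Fin N → ℕ) (n : ℕ) : Fintype (CutIdx d n) := Pi.instFintype

instance {N : ℕ} (d : Fin N → ℕ) (n : ℕ) : DecidableEq (CutIdx d n) :=
  fun a b => Fintype.decidablePiFintype a b

/-- Operators on the tensor product `⊗_{j<n} (H_j^out ⊗ H_j^in)` where
`H_j^out = ℂ^{dO j}` and `H_j^in = ℂ^{dI j}`. -/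
abbrev CMat {N : ℕ} (dO dI : Fin N → ℕ) (n : ℕ) : Type :=
  Matrix (CutIdx dO n × CutIdx dI n) (CutIdx dO n × CutIdx dI n) ℂ

/-- Extend an index on the first `n` factors by a value `k` in the `n`-th factor. -/
def extendAt {N : ℕ} (d : Fin N → ℕ) (n : Fin N) (x : CutIdx d n.val) (k : Fin (d n)) :
    CutIdx d (n.val + 1) := fun j =>
  if h : j.val < n.val then
    Fin.cast (show cut d n.val j = cut d (n.val + 1) j by
      simp [cut, h, Nat.lt_succ_of_lt h]) (x j)
  else if h2 : j.val < n.val + 1 then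
    Fin.cast (show d n = cut d (n.val + 1) j by
      have hje : j = n := Fin.ext (by omega)
      subst hje; simp [cut, h2]) k
  else
    Fin.cast (show cut d n.val j = cut d (n.val + 1) j by simp [cut, h, h2]) (x j)

/-- Restrict an index on the first `n+1` factors to the first `n` factors. -/
def restrictAt {N : ℕ} (d : Fin N → ℕ) (n : Fin N) (x : CutIdx d (n.val + 1)) :
    CutIdx d n.val := fun j =>
  if h : j.val < n.val then
    Fin.cast (show cut d (n.val + 1) j = cut d n.val j by
      simp [cut, h, Nat.lt_succ_of_lt h]) (x j)
  else
    ⟨0, by simp only [cut, if_neg h]; omega⟩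

/-- The component of an index on the first `n+1` factors in the `n`-th factor. -/
def componentAt {N : ℕ} (d : Fin N → ℕ) (n : Fin N) (x : CutIdx d (n.val + 1)) :
    Fin (d n) :=
  Fin.cast (show cut d (n.val + 1) n = d n by simp [cut]) (x n)

/-- Partial trace over the `n`-th output space. -/
def ptraceO {N : ℕ} (dO : Fin N → ℕ) (n : Fin N) {β : Type} [Fintype β]
    (M : Matrix (CutIdx dO (n.val + 1) × β) (CutIdx dO (n.val + 1) × β) ℂ) :
    Matrix (CutIdx dO n.val × β) (CutIdx dO n.val × β) ℂ :=
  fun p q => ∑ k : Fin (dO n), M (extendAt dO n p.1 k, p.2) (extendAt dO n q.1 k, q.2)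

/-- Partial trace over the `n`-th input space. -/
def ptraceI {N : ℕ} (dI : Fin N → ℕ) (n : Fin N) {α : Type} [Fintype α]
    (M : Matrix (α × CutIdx dI (n.val + 1)) (α × CutIdx dI (n.val + 1)) ℂ) :
    Matrix (α × CutIdx dI n.val) (α × CutIdx dI n.val) ℂ :=
  fun p q => ∑ k : Fin (dI n), M (p.1, extendAt dI n p.2 k) (q.1, extendAt dI n q.2 k)

/-- Tensoring with the identity on the `n`-th output space. -/
def idTensorO {N : ℕ} (dO : Fin N → ℕ) (n : Fin N) {β : Type}
    (M : Matrix (CutIdx dO n.val × β) (CutIdx dO n.val × β) ℂ) :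
    Matrix (CutIdx dO (n.val + 1) × β) (CutIdx dO (n.val + 1) × β) ℂ :=
  fun p q => (if componentAt dO n p.1 = componentAt dO n q.1 then (1 : ℂ) else 0) *
    M (restrictAt dO n p.1, p.2) (restrictAt dO n q.1, q.2)

/-- Tensoring with the identity on the `n`-th input space. -/
def idTensorI {N : ℕ} (dI : Fin N → ℕ) (n : Fin N) {α : Type}
    (M : Matrix (α × CutIdx dI n.val) (α × CutIdx dI n.val) ℂ) :
    Matrix (α × CutIdx dI (n.val + 1)) (α × CutIdx dI (n.val + 1)) ℂ :=
  fun p q => (if componentAt dI n p.2 = componentAt dI n q.2 then (1 : ℂ) else 0) *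
    M (p.1, restrictAt dI n p.2) (q.1, restrictAt dI n q.2)

/-- Transport an operator along an equality of the number of kept factors. -/
def castCMat {N : ℕ} (dO dI : Fin N → ℕ) {a b : ℕ} (h : a = b) (M : CMat dO dI a) :
    CMat dO dI b := h ▸ M

/-- `C` is a quantum comb on `⊗_{j=1}^N (H_j^out ⊗ H_j^in)`:
it is positive semidefinite and admits a chain `C⁽ⁿ⁾` of positive semidefinite operators with
`C⁽ᴺ⁾ = C`, `C⁽⁰⁾ = 1` and `Tr_{H_n^out} C⁽ⁿ⁾ = I_{H_n^in} ⊗ C⁽ⁿ⁻¹⁾`. -/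
def IsQuantumComb {N : ℕ} (dO dI : Fin N → ℕ) (C : CMat dO dI N) : Prop :=
  C.PosSemidef ∧ ∃ Cn : (n : ℕ) → CMat dO dI n,
    (∀ n ≤ N, (Cn n).PosSemidef) ∧ Cn N = C ∧ Cn 0 = 1 ∧
    ∀ n : Fin N, ptraceO dO n (Cn (n.val + 1)) = idTensorI dI n (Cn n.val)

/-- `Γ` is a dual comb: `Γ = I_{H_N^out} ⊗ Γ⁽ᴺ⁾` for a chain of positive semidefinite operators
`Γ⁽ⁿ⁾` on `H_n^in ⊗ (⊗_{j<n} (H_j^out ⊗ H_j^in))` with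
`Tr_{H_n^in} Γ⁽ⁿ⁾ = I_{H_{n-1}^out} ⊗ Γ⁽ⁿ⁻¹⁾` and `Tr_{H_1^in} Γ⁽¹⁾ = 1`.
Here `G m` plays the role of `Γ⁽ᵐ⁺¹⁾`. -/
def IsDualComb {N : ℕ} (dO dI : Fin N → ℕ) (Γ : CMat dO dI N) : Prop :=
  ∃ G : (m : ℕ) → Matrix (CutIdx dO m × CutIdx dI (m + 1)) (CutIdx dO m × CutIdx dI (m + 1)) ℂ,
    (∀ m < N, (G m).PosSemidef) ∧
    (∀ h0 : 0 < N, ptraceI dI ⟨0, h0⟩ (G 0) = 1) ∧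
    (∀ m, ∀ h : m + 1 < N,
      ptraceI dI ⟨m + 1, h⟩ (G (m + 1)) = idTensorO dO ⟨m, Nat.lt_of_succ_lt h⟩ (G m)) ∧
    (∀ m, ∀ h : m + 1 = N,
      Γ = castCMat dO dI h (idTensorO dO ⟨m, h ▸ Nat.lt_succ_self m⟩ (G m))) ∧
    (N = 0 → Γ = 1)

/-- Square root of a positive semidefinite matrix, as `Matrix.PosSemidef.sqrt` was defined
in the older Mathlib (removed since). -/
def _root_.Matrix.PosSemidef.sqrt {𝕜 : Type*} [RCLike 𝕜] {n : Type*} [Fintype n] [DecidableEq n]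
    {A : Matrix n n 𝕜} (hA : A.PosSemidef) : Matrix n n 𝕜 :=
  (hA.1.eigenvectorUnitary : Matrix n n 𝕜) * diagonal ((↑) ∘ Real.sqrt ∘ hA.1.eigenvalues) *
    (star hA.1.eigenvectorUnitary : Matrix n n 𝕜)

/-- The trace norm `‖A‖₁ = Tr √(AᴴA)`. -/
def traceNorm {ι : Type} [Fintype ι] [DecidableEq ι] (A : Matrix ι ι ℂ) : ℝ :=
  ((Matrix.posSemidef_conjTranspose_mul_self A).sqrt.trace).re

/-- Square root of a positive semidefinite matrix (junk value `0` otherwise). -/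
def msqrt {ι : Type} [Fintype ι] [DecidableEq ι] (A : Matrix ι ι ℂ) : Matrix ι ι ℂ :=
  if h : A.PosSemidef then h.sqrt else 0

/-- Positive part `A₊` of a Hermitian matrix (junk value `0` otherwise). -/
def posPartMat {ι : Type} [Fintype ι] [DecidableEq ι] (A : Matrix ι ι ℂ) : Matrix ι ι ℂ :=
  if h : A.IsHermitian then h.cfc (fun x => max x 0) else 0

/-- Matrix logarithm in base 2 of a Hermitian matrix via the functional calculus
(junk value `0` otherwise). -/
def mlog {ι : Type} [Fintype ι] [DecidableEq ι] (A : Matrix ι ι ℂ) : Matrix ι ι ℂ :=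
  if h : A.IsHermitian then h.cfc (Real.logb 2) else 0

/-- Quantum relative entropy `D(ρ‖σ) = Tr[ρ (log ρ - log σ)]` (base-2 logarithm). -/
def relEnt {ι : Type} [Fintype ι] [DecidableEq ι] (ρ σ : Matrix ι ι ℂ) : ℝ :=
  ((ρ * (mlog ρ - mlog σ)).trace).re

/-- Support inclusion `supp A ⊆ supp B` (ranges of the associated linear maps). -/
def suppSubset {ι : Type} [Fintype ι] [DecidableEq ι] (A B : Matrix ι ι ℂ) : Prop :=
  LinearMap.range (Matrix.toLin' A) ≤ LinearMap.range (Matrix.toLin' B)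

/-- The feasible set of the max-relative entropy `D_max(A‖B)`. -/
def DmaxSet {ι : Type} [Fintype ι] [DecidableEq ι] (A B : Matrix ι ι ℂ) : Set ℝ :=
  {lam : ℝ | 0 ≤ lam ∧ ((lam : ℂ) • B - A).PosSemidef}

/-- Max-relative entropy `D_max(A‖B) = log min {λ ≥ 0 | λB - A ≥ 0}`, equal to `⊤`
when no such `λ` exists (i.e. when `supp A ⊄ supp B`). -/
def Dmax {ι : Type} [Fintype ι] [DecidableEq ι] (A B : Matrix ι ι ℂ) : EReal :=
  if (DmaxSet A B).Nonempty then ((Real.logb 2 (sInf (DmaxSet A B)) : ℝ) : EReal) else ⊤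

/-- Smooth max-relative entropy of quantum combs:
`D_max^ε(C₀‖C₁) = min { D_max(C̃‖C₁) | C̃ a quantum comb, ½‖C̃ - C₀‖₁ ≤ ε }`. -/
def DmaxSmoothComb {N : ℕ} (dO dI : Fin N → ℕ) (ε : ℝ) (C0 C1 : CMat dO dI N) : EReal :=
  sInf { x : EReal | ∃ C : CMat dO dI N, IsQuantumComb dO dI C ∧
    traceNorm (C - C0) ≤ 2 * ε ∧ x = Dmax C C1 }

/-- Revised smooth max-relative entropy of quantum combs:
`D̃_max^ε(C₀‖C₁) = max_Γ min { D_max(C‖√Γ C₁ √Γ) | C ≥ 0, Tr C = 1,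
½‖√Γ C₀ √Γ - C‖₁ ≤ ε }`, the max over dual combs `Γ`. -/
def DmaxTilde {N : ℕ} (dO dI : Fin N → ℕ) (ε : ℝ) (C0 C1 : CMat dO dI N) : EReal :=
  sSup { x : EReal | ∃ Γ : CMat dO dI N, IsDualComb dO dI Γ ∧
    x = sInf { y : EReal | ∃ C : CMat dO dI N, C.PosSemidef ∧ C.trace = 1 ∧
      traceNorm (msqrt Γ * C0 * msqrt Γ - C) ≤ 2 * ε ∧
      y = Dmax C (msqrt Γ * C1 * msqrt Γ) } }

/-- Hypothesis-testing quantity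
`β_δ(C₀‖C₁) = min { Tr[Π √Γ C₁ √Γ] | 0 ≤ Π ≤ I, Γ dual comb, Tr[(I-Π) √Γ C₀ √Γ] ≤ δ }`. -/
def betaHT {N : ℕ} (dO dI : Fin N → ℕ) (δ : ℝ) (C0 C1 : CMat dO dI N) : ℝ :=
  sInf { b : ℝ | ∃ P Γ : CMat dO dI N, P.PosSemidef ∧ ((1 : CMat dO dI N) - P).PosSemidef ∧
    IsDualComb dO dI Γ ∧
    (((1 - P) * (msqrt Γ * C0 * msqrt Γ)).trace).re ≤ δ ∧
    b = ((P * (msqrt Γ * C1 * msqrt Γ)).trace).re }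

/-- Maximum score `w_max(Ω) = max { Tr(Ω C) | C a quantum comb }`. -/
def wmax {N : ℕ} (dO dI : Fin N → ℕ) (Ω : CMat dO dI N) : ℝ :=
  sSup { w : ℝ | ∃ C : CMat dO dI N, IsQuantumComb dO dI C ∧ w = ((Ω * C).trace).re }

/-- Smooth maximum score `w_max^ε(Ω) = sup { w_max(Ω') | Ω' ≥ 0, Tr Ω' = Tr Ω,
½‖Ω - Ω'‖₁ ≤ ε }`. -/
def wmaxSmooth {N : ℕ} (dO dI : Fin N → ℕ) (ε : ℝ) (Ω : CMat dO dI N) : ℝ :=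
  sSup { w : ℝ | ∃ Ω' : CMat dO dI N, Ω'.PosSemidef ∧ traceNorm (Ω - Ω') ≤ 2 * ε ∧
    Ω'.trace = Ω.trace ∧ w = wmax dO dI Ω' }

/-- Dimension function of the `n`-fold concatenated network. -/
def repDim {N : ℕ} (n : ℕ) (d : Fin N → ℕ) : Fin (n * N) → ℕ :=
  fun j => d ⟨j.val % N, Nat.mod_lt _ (Nat.pos_of_ne_zero fun h =>
    Nat.not_lt_zero j.val (by simpa [h] using j.isLt))⟩

/-- Extract the `i`-th copy of an index of the `n`-fold concatenated network. -/
def sliceIdx {N : ℕ} (n : ℕ) (d : Fin N → ℕ) (i : Fin n) (x : CutIdx (repDim n d) (n * N)) :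
    CutIdx d N := fun j =>
  Fin.cast (by
    have hj := j.isLt
    have h1 : (i.val + 1) * N ≤ n * N := Nat.mul_le_mul_right N i.isLt
    have h2 : (i.val + 1) * N = i.val * N + N := Nat.succ_mul _ _
    have hb : i.val * N + j.val < n * N := by omega
    have hm : (i.val * N + j.val) % N = j.val := by
      rw [Nat.add_comm, Nat.add_mul_mod_self_right]; exact Nat.mod_eq_of_lt hj
    show cut (repDim n d) (n * N) ⟨i.val * N + j.val, hb⟩ = cut d N j
    simp only [cut, repDim, if_pos hb, if_pos hj]
    exact congrArg d (Fin.ext hm))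
    (x ⟨i.val * N + j.val, by
      have hj := j.isLt
      have h1 : (i.val + 1) * N ≤ n * N := Nat.mul_le_mul_right N i.isLt
      have h2 : (i.val + 1) * N = i.val * N + N := Nat.succ_mul _ _
      omega⟩)

/-- The `n`-fold tensor power `Ω^{⊗n}` on the `n`-fold concatenated network. -/
def tpow {N : ℕ} (dO dI : Fin N → ℕ) (n : ℕ) (Ω : CMat dO dI N) :
    CMat (repDim n dO) (repDim n dI) (n * N) :=
  fun p q => ∏ i : Fin n,
    Ω (sliceIdx n dO i p.1, sliceIdx n dI i p.2) (sliceIdx n dO i q.1, sliceIdx n dI i q.2)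

/-- Extract the left part of an index of the concatenation of two networks. -/
def appendIdxL {N M : ℕ} (d : Fin N → ℕ) (e : Fin M → ℕ)
    (x : CutIdx (Fin.append d e) (N + M)) : CutIdx d N := fun j =>
  Fin.cast (by
    show cut (Fin.append d e) (N + M) (Fin.castAdd M j) = cut d N j
    simp only [cut, if_pos (Fin.castAdd M j).isLt, if_pos j.isLt]
    exact Fin.append_left d e j) (x (Fin.castAdd M j))

/-- Extract the right part of an index of the concatenation of two networks. -/
def appendIdxR {N M : ℕ} (d : Fin N → ℕ) (e : Fin M → ℕ)
    (x : CutIdx (Fin.append d e) (N + M)) : CutIdx e M := fun j =>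
  Fin.cast (by
    show cut (Fin.append d e) (N + M) (Fin.natAdd N j) = cut e M j
    simp only [cut, if_pos (Fin.natAdd N j).isLt, if_pos j.isLt]
    exact Fin.append_right d e j) (x (Fin.natAdd N j))

/-- The tensor product `C ⊗ C'` of operators on two networks, as an operator on the
concatenated network with `N + M` steps. -/
def tens2 {N M : ℕ} {dO dI : Fin N → ℕ} {eO eI : Fin M → ℕ}
    (C : CMat dO dI N) (C' : CMat eO eI M) :
    CMat (Fin.append dO eO) (Fin.append dI eI) (N + M) :=
  fun p q =>
    C (appendIdxL dO eO p.1, appendIdxL dI eI p.2) (appendIdxL dO eO q.1, appendIdxL dI eI q.2) *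
    C' (appendIdxR dO eO p.1, appendIdxR dI eI p.2) (appendIdxR dO eO q.1, appendIdxR dI eI q.2)

end QComb

section Spectral

variable {𝕜 ι : Type*} [RCLike 𝕜] [Fintype ι] [DecidableEq ι]

lemma Matrix.IsHermitian.trace_cfc {A : Matrix ι ι 𝕜} (hA : A.IsHermitian) (f : ℝ → ℝ) :
    (hA.cfc f).trace = ∑ i, (f (hA.eigenvalues i) : 𝕜) := by
  rw [IsHermitian.cfc, Unitary.conjStarAlgAut_apply, trace_mul_cycle, Unitary.coe_star_mul_self,
    one_mul, trace_diagonal]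
  rfl

lemma Matrix.IsHermitian.trace_mul_eq_sum {A : Matrix ι ι 𝕜} (hA : A.IsHermitian)
    (C : Matrix ι ι 𝕜) :
    (A * C).trace = ∑ i, (hA.eigenvalues i : 𝕜) *
      ((hA.eigenvectorUnitary : Matrix ι ι 𝕜)ᴴ * C *
        (hA.eigenvectorUnitary : Matrix ι ι 𝕜)) i i := by
  set U : Matrix ι ι 𝕜 := ↑hA.eigenvectorUnitary
  have hU : U * Uᴴ = 1 := Unitary.mul_star_self_of_mem hA.eigenvectorUnitary.2
  have hdiag : Uᴴ * A * U = diagonal (RCLike.ofReal ∘ hA.eigenvalues) := by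
    simpa [star_eq_conjTranspose] using hA.conjStarAlgAut_star_eigenvectorUnitary
  calc (A * C).trace = ((Uᴴ * A * U) * (Uᴴ * C * U)).trace := by
        rw [mul_assoc (Uᴴ * A), ← mul_assoc U, ← mul_assoc U, hU, one_mul, ← mul_assoc]
        conv_rhs => rw [trace_mul_comm, ← mul_assoc, ← mul_assoc, hU, one_mul]
    _ = _ := by
      rw [hdiag, trace]
      simp [diagonal_mul]

open scoped MatrixOrder in
lemma Matrix.PosSemidef.sqrt_eq_cfcSqrt {A : Matrix ι ι 𝕜} (hA : A.PosSemidef) :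
    hA.sqrt = CFC.sqrt A := by
  rw [CFC.sqrt_eq_cfc, cfc_nnreal_eq_real _ A hA.nonneg, hA.1.cfc_eq]
  simp only [IsHermitian.cfc, Matrix.PosSemidef.sqrt, Unitary.conjStarAlgAut_apply]
  have h0 : ∀ j, max (hA.1.eigenvalues j) 0 = hA.1.eigenvalues j :=
    fun j => max_eq_left (hA.eigenvalues_nonneg j)
  simp only [Function.comp_def, Real.coe_sqrt, Real.coe_toNNReal', h0]

end Spectral

lemma Finset.abs_sum_mul_le_of_sum_eq_zero {ι : Type*} {s : Finset ι} {a b : ι → ℝ} {t : ℝ}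
    (ha : ∑ i ∈ s, a i = 0) (hb : ∀ i ∈ s, b i ∈ Set.Icc 0 t) :
    |∑ i ∈ s, a i * b i| ≤ (∑ i ∈ s, |a i|) * t / 2 := by
  have hshift : ∑ i ∈ s, a i * b i = ∑ i ∈ s, a i * (b i - t / 2) := by
    simp only [mul_sub, Finset.sum_sub_distrib, ← Finset.sum_mul, ha, zero_mul, sub_zero]
  calc |∑ i ∈ s, a i * b i|
      ≤ ∑ i ∈ s, |a i * (b i - t / 2)| := hshift ▸ Finset.abs_sum_le_sum_abs _ _
    _ ≤ ∑ i ∈ s, |a i| * (t / 2) := by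
        gcongr with i hi
        obtain ⟨h0, ht⟩ := hb i hi
        rw [abs_mul]
        exact mul_le_mul_of_nonneg_left (abs_le.2 ⟨by linarith, by linarith⟩) (abs_nonneg _)
    _ = (∑ i ∈ s, |a i|) * t / 2 := by rw [← Finset.sum_mul, mul_div_assoc]

lemma Matrix.PosSemidef.diag_le_trace {ι R : Type*} [Fintype ι] [Ring R] [PartialOrder R]
    [StarRing R] [IsOrderedAddMonoid R] {A : Matrix ι ι R} (hA : A.PosSemidef) (i : ι) :
    A i i ≤ A.trace :=
  Finset.single_le_sum (f := fun j => A j j) (fun _ _ => hA.diag_nonneg) (Finset.mem_univ i)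

lemma Real.sSup_image_le_sSup_image_add {α : Type*} {S : Set α} {f g : α → ℝ} {c : ℝ}
    (hc : 0 ≤ c) (hfg : ∀ x ∈ S, f x ≤ g x + c) (hgf : ∀ x ∈ S, g x ≤ f x + c) :
    sSup (f '' S) ≤ sSup (g '' S) + c := by
  rcases S.eq_empty_or_nonempty with rfl | hS
  · simpa using hc
  by_cases hg : BddAbove (g '' S)
  · refine csSup_le (hS.image f) (Set.forall_mem_image.2 fun x hx => ?_)
    exact (hfg x hx).trans (add_le_add_left (le_csSup hg (Set.mem_image_of_mem g hx)) c)
  · have hf : ¬BddAbove (f '' S) := fun ⟨b, hb⟩ => hg ⟨b + c, Set.forall_mem_image.2 fun x hx =>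
      (hgf x hx).trans (add_le_add_left (hb (Set.mem_image_of_mem f hx)) c)⟩
    simpa [Real.sSup_of_not_bddAbove hf, Real.sSup_of_not_bddAbove hg] using hc

lemma Real.abs_sSup_image_sub_sSup_image_le {α : Type*} {S : Set α} {f g : α → ℝ} {c : ℝ}
    (hc : 0 ≤ c) (hfg : ∀ x ∈ S, |f x - g x| ≤ c) :
    |sSup (f '' S) - sSup (g '' S)| ≤ c := by
  have hfg' x hx : f x ≤ g x + c := sub_le_iff_le_add'.1 (abs_sub_le_iff.1 (hfg x hx)).1
  have hgf' x hx : g x ≤ f x + c := sub_le_iff_le_add'.1 (abs_sub_le_iff.1 (hfg x hx)).2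
  rw [abs_sub_le_iff, sub_le_iff_le_add', sub_le_iff_le_add']
  exact ⟨sSup_image_le_sSup_image_add hc hfg' hgf', sSup_image_le_sSup_image_add hc hgf' hfg'⟩

namespace QComb

open scoped MatrixOrder in
lemma traceNorm_eq_sum_abs_eigenvalues {ι : Type} [Fintype ι] [DecidableEq ι]
    {A : Matrix ι ι ℂ} (hA : A.IsHermitian) :
    traceNorm A = ∑ i, |hA.eigenvalues i| := by
  have habs : CFC.abs A = hA.cfc (‖·‖) := by rw [CFC.abs_eq_cfc_norm A hA.isSelfAdjoint, hA.cfc_eq]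
  rw [traceNorm, PosSemidef.sqrt_eq_cfcSqrt, show CFC.sqrt (Aᴴ * A) = CFC.abs A from rfl, habs,
    hA.trace_cfc]
  simp [Complex.re_sum]

lemma abs_re_trace_mul_le {ι : Type} [Fintype ι] [DecidableEq ι] {A C : Matrix ι ι ℂ}
    (hA : A.IsHermitian) (hAtr : A.trace = 0) (hC : C.PosSemidef) :
    |(A * C).trace.re| ≤ traceNorm A * C.trace.re / 2 := by
  set U : Matrix ι ι ℂ := ↑hA.eigenvectorUnitary
  have hE : (Uᴴ * C * U).PosSemidef := hC.conjTranspose_mul_mul_same U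
  have hEtr : (Uᴴ * C * U).trace = C.trace := by
    rw [trace_mul_cycle, ← star_eq_conjTranspose,
      Unitary.mul_star_self_of_mem hA.eigenvectorUnitary.2, one_mul]
  have hsum : ∑ i, hA.eigenvalues i = 0 := by
    simpa [hAtr, Complex.re_sum] using (congrArg Complex.re hA.trace_eq_sum_eigenvalues).symm
  rw [hA.trace_mul_eq_sum, Complex.re_sum, traceNorm_eq_sum_abs_eigenvalues hA]
  simp only [RCLike.ofReal_eq_complex_ofReal, Complex.re_ofReal_mul]
  refine Finset.abs_sum_mul_le_of_sum_eq_zero hsum fun i _ => ⟨?_, ?_⟩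
  · exact (Complex.le_def.1 hE.diag_nonneg).1
  · exact hEtr ▸ (Complex.le_def.1 (hE.diag_le_trace i)).1

section CutIdx

variable {N : ℕ}

lemma restrictAt_extendAt (d : Fin N → ℕ) (n : Fin N) (x : CutIdx d n.val) (k : Fin (d n)) :
    restrictAt d n (extendAt d n x k) = x := by
  funext j
  apply Fin.ext
  by_cases h : j.val < n.val
  · simp [restrictAt, extendAt, h]
  · have hx := (x j).isLt
    simp only [cut, if_neg h] at hx
    simp only [restrictAt, dif_neg h]
    omega

lemma componentAt_extendAt (d : Fin N → ℕ) (n : Fin N) (x : CutIdx d n.val) (k : Fin (d n)) :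
    componentAt d n (extendAt d n x k) = k := by
  apply Fin.ext
  simp [componentAt, extendAt]

lemma extendAt_restrictAt_componentAt (d : Fin N → ℕ) (n : Fin N) (y : CutIdx d (n.val + 1)) :
    extendAt d n (restrictAt d n y) (componentAt d n y) = y := by
  funext j
  apply Fin.ext
  by_cases h : j.val < n.val
  · simp [extendAt, restrictAt, h]
  · by_cases h2 : j.val < n.val + 1
    · obtain rfl : j = n := Fin.ext (by omega)
      simp [extendAt, componentAt]
    · have hy := (y j).isLt
      simp only [cut, if_neg h2] at hy
      simp [extendAt, restrictAt, h, h2]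
      omega

def extendEquiv (d : Fin N → ℕ) (n : Fin N) :
    CutIdx d n.val × Fin (d n) ≃ CutIdx d (n.val + 1) where
  toFun p := extendAt d n p.1 p.2
  invFun y := (restrictAt d n y, componentAt d n y)
  left_inv p := Prod.ext (restrictAt_extendAt d n p.1 p.2) (componentAt_extendAt d n p.1 p.2)
  right_inv := extendAt_restrictAt_componentAt d n

lemma card_cutIdx (d : Fin N → ℕ) (n : ℕ) : Fintype.card (CutIdx d n) = ∏ j, cut d n j := by
  simp [CutIdx]

lemma prod_cut_succ (d : Fin N → ℕ) (n : Fin N) :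
    ∏ j, cut d (n.val + 1) j = d n * ∏ j, cut d n.val j := by
  rw [Fintype.prod_eq_mul_prod_compl n, Fintype.prod_eq_mul_prod_compl n (cut d n.val)]
  have hcut : ∀ j ∈ ({n}ᶜ : Finset (Fin N)), cut d (n.val + 1) j = cut d n.val j := by
    intro j hj
    have hjn : j.val ≠ n.val := Fin.val_ne_of_ne (by simpa using hj)
    simp only [cut]
    exact if_congr (by omega) rfl rfl
  have hn1 : cut d (n.val + 1) n = d n := by simp [cut]
  have hn0 : cut d n.val n = 1 := by simp [cut]
  rw [Finset.prod_congr rfl hcut, hn1, hn0, one_mul]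

lemma trace_ptraceO (dO : Fin N → ℕ) (n : Fin N) {β : Type} [Fintype β]
    (M : Matrix (CutIdx dO (n.val + 1) × β) (CutIdx dO (n.val + 1) × β) ℂ) :
    (ptraceO dO n M).trace = M.trace := by
  rw [trace, trace, ← ((extendEquiv dO n).prodCongr (Equiv.refl β)).sum_comp]
  simp only [Fintype.sum_prod_type, diag, ptraceO, Finset.sum_comm (γ := β)]
  rfl

lemma trace_idTensorI (dI : Fin N → ℕ) (n : Fin N) {α : Type} [Fintype α]
    (M : Matrix (α × CutIdx dI n.val) (α × CutIdx dI n.val) ℂ) :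
    (idTensorI dI n M).trace = dI n * M.trace := by
  rw [trace, trace, ← ((Equiv.refl α).prodCongr (extendEquiv dI n)).sum_comp]
  simp [Fintype.sum_prod_type, idTensorI, extendEquiv, restrictAt_extendAt, Finset.mul_sum]

end CutIdx

lemma IsQuantumComb.trace_eq {N : ℕ} {dO dI : Fin N → ℕ} {C : CMat dO dI N}
    (hC : IsQuantumComb dO dI C) : C.trace = ∏ j, (dI j : ℂ) := by
  obtain ⟨-, Cn, -, rfl, hC0, hchain⟩ := hC
  have htrace : ∀ n ≤ N, (Cn n).trace = ∏ j, (cut dI n j : ℂ) := by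
    intro n
    induction n with
    | zero =>
      intro _
      simp [hC0, card_cutIdx, cut]
    | succ n ih =>
      intro hn
      have hchain_n := congrArg trace (hchain ⟨n, hn⟩)
      rw [trace_ptraceO, trace_idTensorI, ih (Nat.le_of_succ_le hn)] at hchain_n
      rw [hchain_n]
      exact_mod_cast (prod_cut_succ dI ⟨n, hn⟩).symm
  rw [htrace N le_rfl]
  simp [cut]

lemma wmax_eq_sSup_image {N : ℕ} (dO dI : Fin N → ℕ) (Ω : CMat dO dI N) :
    wmax dO dI Ω = sSup ((fun C => (Ω * C).trace.re) '' {C | IsQuantumComb dO dI C}) := by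
  simp only [wmax, Set.image, Set.mem_ofPred_eq, eq_comm]

theorem abs_wmax_sub_wmax_le_general {N : ℕ} (dO dI : Fin N → ℕ) (M1 M2 : CMat dO dI N)
    (h1 : M1.PosSemidef) (h2 : M2.PosSemidef) (htr : M1.trace = M2.trace)
    (ε : ℝ) (hdist : traceNorm (M1 - M2) ≤ 2 * ε) :
    |wmax dO dI M1 - wmax dO dI M2| ≤ (∏ j, (dI j : ℝ)) * ε := by
  have hΔ : (M1 - M2).IsHermitian := h1.1.sub h2.1
  have hΔtr : (M1 - M2).trace = 0 := by rw [trace_sub, htr, sub_self]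
  have hε : 0 ≤ ε := by
    have := traceNorm_eq_sum_abs_eigenvalues hΔ ▸ hdist
    linarith [Finset.sum_nonneg fun i (_ : i ∈ Finset.univ) => abs_nonneg (hΔ.eigenvalues i)]
  rw [wmax_eq_sSup_image, wmax_eq_sSup_image]
  refine Real.abs_sSup_image_sub_sSup_image_le (by positivity) fun C hC => ?_
  have htrC : C.trace.re = ∏ j, (dI j : ℝ) := by
    rw [IsQuantumComb.trace_eq hC]
    norm_cast
  calc |(M1 * C).trace.re - (M2 * C).trace.re|
      = |((M1 - M2) * C).trace.re| := by rw [sub_mul, trace_sub, Complex.sub_re]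
    _ ≤ traceNorm (M1 - M2) * C.trace.re / 2 := abs_re_trace_mul_le hΔ hΔtr hC.1
    _ ≤ (∏ j, (dI j : ℝ)) * ε := by
      rw [htrC]
      nlinarith [show 0 ≤ ∏ j, (dI j : ℝ) by positivity]

/-- If `M₁, M₂ ≥ 0` have equal traces and `½‖M₁ - M₂‖₁ ≤ ε`, then
`|w_max(M₁) - w_max(M₂)| ≤ D ε` with `D = ∏_j dim H_j^in`. -/
theorem abs_wmax_sub_wmax_le {N : ℕ} (dO dI : Fin N → ℕ) (M1 M2 : CMat dO dI N)
    (h1 : M1.PosSemidef) (h2 : M2.PosSemidef) (htr : M1.trace = M2.trace)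
    (ε : ℝ) (hε : 0 ≤ ε) (hdist : traceNorm (M1 - M2) ≤ 2 * ε) :
    |wmax dO dI M1 - wmax dO dI M2| ≤ (∏ j, (dI j : ℝ)) * ε :=
  abs_wmax_sub_wmax_le_general dO dI M1 M2 h1 h2 htr ε hdist

end QComb
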